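/- arXiv:chao-dyn/9711010 — 2 statements merged into one kernel-verified Lean document; each statement's English description precedes it below -/
import Mathlib

section
/- Let f(x) = a + bx + c|x|^γ with c ≠ 0 and 1 < γ < 2 (γ not an integer). Then the critical order of f at x = 0 equals γ; that is, the local fractional derivative of order q of f at 0 exists and is 0 for all q < γ with 1 < q, and fails to exist (diverges) for q > γ. -/
/-!
Subtracting the first-order Taylor polynomial `a + b x` leaves `c |x|^γ`, since `|x|^γ` has
derivative `0` at `0` for `γ > 1`. For `t > 0` the substitution `y = t s` turns the
Riemann–Liouville integral `∫₀ᵗ c |y|^γ (t - y)^(1-q) dy` into `c B t^(γ+2-q)` with a positive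
Beta integral `B`, so after two derivatives the local fractional quotient is a nonzero multiple
of `x^(γ-q)`: it tends to `0` for `q < γ` and is unbounded as `x → 0⁺` for `q > γ`.
-/
open Real Filter Set Topology Asymptotics

/-- Riemann-Liouville fractional derivative of order `q ∈ (N, N+1)` with lower limit `a`:
`(1/Γ(N+1-q)) (d/dx)^{N+1} ∫_a^x f(y)/(x-y)^{q-N} dy`. -/
noncomputable def rlDerivN (q a : ℝ) (N : ℕ) (f : ℝ → ℝ) (x : ℝ) : ℝ :=
  (1 / Real.Gamma (N + 1 - q)) *
    iteratedDeriv (N + 1) (fun t => ∫ y in a..t, f y / (t - y) ^ (q - N)) x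

/-- The local fractional derivative of order `q ∈ (N, N+1)` of `f` at `y` exists and equals `L`:
the Riemann-Liouville derivative (lower limit `y`) of `f` minus its degree-`N` Taylor
polynomial at `y` tends to `L` as `x → y⁺`. -/
def HasLFDgen (f : ℝ → ℝ) (q y : ℝ) (N : ℕ) (L : ℝ) : Prop :=
  Tendsto (fun x => rlDerivN q y N
      (fun u => f u - ∑ n ∈ Finset.range (N + 1),
        iteratedDeriv n f y / Real.Gamma (n + 1) * (u - y) ^ n) x)
    (𝓝[>] y) (𝓝 L)

open MeasureTheory

lemma sum_range_two_taylor {f : ℝ → ℝ} {f' y : ℝ} (hf : HasDerivAt f f' y) (u : ℝ) :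
    ∑ n ∈ Finset.range 2, iteratedDeriv n f y / Gamma (n + 1) * (u - y) ^ n
      = f y + f' * (u - y) := by
  simp [Finset.sum_range_succ, hf.deriv, one_add_one_eq_two]

lemma taylor_remainder_affine_add_abs_rpow (a b c : ℝ) {γ : ℝ} (hγ : 1 < γ) :
    (fun u => (a + b * u + c * |u| ^ γ) - ∑ n ∈ Finset.range (1 + 1),
      iteratedDeriv n (fun x => a + b * x + c * |x| ^ γ) 0 / Gamma (n + 1) * (u - 0) ^ n)
      = fun u => c * |u| ^ γ := by
  have hderiv : HasDerivAt (fun x => a + b * x + c * |x| ^ γ) b 0 := by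
    have habs : HasDerivAt (fun x : ℝ => |x| ^ γ) 0 0 := by
      simpa using hasDerivAt_abs_rpow 0 hγ
    have h := (((hasDerivAt_id' (x := (0 : ℝ))).const_mul b).const_add a).fun_add
      (habs.const_mul c)
    simpa only [mul_one, mul_zero, add_zero] using h
  funext u
  rw [sum_range_two_taylor hderiv]
  simp [Real.zero_rpow (by linarith : γ ≠ 0)]

/-- `B(α + 1, β + 1)`, written with the exponents of the integrand. -/
noncomputable def rpowBetaIntegral (α β : ℝ) : ℝ :=
  ∫ s in (0 : ℝ)..1, s ^ α * (1 - s) ^ β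

lemma rpowBetaIntegral_pos {α β : ℝ} (hα : 0 ≤ α) (hβ : -1 < β) :
    0 < rpowBetaIntegral α β := by
  have hsing : IntervalIntegrable (fun s : ℝ => (1 - s) ^ β) volume 0 1 := by
    simpa using
      ((intervalIntegral.intervalIntegrable_rpow' hβ (a := 0) (b := 1)).comp_sub_left 1).symm
  refine intervalIntegral.intervalIntegral_pos_of_pos_on (hsing.continuousOn_mul fun s _ =>
    (continuousAt_rpow_const s α (Or.inr hα)).continuousWithinAt) (fun s hs => ?_) zero_lt_one
  exact mul_pos (rpow_pos_of_pos hs.1 _) (rpow_pos_of_pos (sub_pos.2 hs.2) _)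

lemma integral_rpow_mul_sub_rpow (α β : ℝ) {t : ℝ} (ht : 0 < t) :
    ∫ y in (0 : ℝ)..t, y ^ α * (t - y) ^ β = rpowBetaIntegral α β * t ^ (α + β + 1) := by
  have hscale := intervalIntegral.smul_integral_comp_mul_right
    (fun y => y ^ α * (t - y) ^ β) t (a := 0) (b := 1)
  simp only [zero_mul, one_mul, smul_eq_mul] at hscale
  rw [← hscale, rpowBetaIntegral, mul_comm _ (t ^ _), ← intervalIntegral.integral_const_mul,
    ← intervalIntegral.integral_const_mul]
  refine intervalIntegral.integral_congr fun s hs => ?_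
  rw [uIcc_of_le zero_le_one] at hs
  rw [mul_rpow hs.1 ht.le, show t - s * t = t * (1 - s) by ring,
    mul_rpow ht.le (sub_nonneg.2 hs.2), rpow_add ht, rpow_add ht, rpow_one]
  ring

noncomputable def absRpowRLCoeff (q γ : ℝ) (N : ℕ) : ℝ :=
  rpowBetaIntegral γ (N - q) * (descPochhammer ℝ (N + 1)).eval (γ + (N - q) + 1) /
    Gamma (N + 1 - q)

lemma absRpowRLCoeff_pos {q γ : ℝ} {N : ℕ} (hγ : 0 ≤ γ) (hqN : q < N + 1) (hqγ : q < γ + 1) :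
    0 < absRpowRLCoeff q γ N := by
  refine div_pos (mul_pos (rpowBetaIntegral_pos hγ (by linarith)) (descPochhammer_pos ?_))
    (Gamma_pos_of_pos (by linarith))
  push_cast
  linarith

lemma rlDerivN_const_mul_abs_rpow (c γ q : ℝ) (N : ℕ) {x : ℝ} (hx : 0 < x) :
    rlDerivN q 0 N (fun u => c * |u| ^ γ) x = c * absRpowRLCoeff q γ N * x ^ (γ - q) := by
  have hkernel : ∀ t ∈ Ioi (0 : ℝ), ∫ y in (0 : ℝ)..t, c * |y| ^ γ / (t - y) ^ (q - N)
      = c * rpowBetaIntegral γ (N - q) * t ^ (γ + (N - q) + 1) := by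
    intro t ht
    rw [mul_assoc, ← integral_rpow_mul_sub_rpow _ _ ht, ← intervalIntegral.integral_const_mul]
    refine intervalIntegral.integral_congr fun y hy => ?_
    rw [uIcc_of_le ht.le] at hy
    rw [abs_of_nonneg hy.1, show (N : ℝ) - q = -(q - N) by ring,
      rpow_neg (sub_nonneg.2 hy.2), div_eq_mul_inv, mul_assoc]
  have hlocal : (fun t => ∫ y in (0 : ℝ)..t, c * |y| ^ γ / (t - y) ^ (q - N))
      =ᶠ[𝓝 x] fun t => c * rpowBetaIntegral γ (N - q) * t ^ (γ + (N - q) + 1) :=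
    eventually_of_mem (Ioi_mem_nhds hx) hkernel
  rw [rlDerivN, hlocal.iteratedDeriv_eq, iteratedDeriv_const_mul_field, iteratedDeriv_eq_iterate,
    iter_deriv_rpow_const, absRpowRLCoeff]
  push_cast
  rw [show γ + (N - q) + 1 - (N + 1) = γ - q by ring]
  ring

lemma hasLFDgen_affine_add_abs_rpow_iff (a b c : ℝ) {γ : ℝ} (hγ : 1 < γ) (q L : ℝ) :
    HasLFDgen (fun x => a + b * x + c * |x| ^ γ) q 0 1 L ↔
      Tendsto (fun x => c * absRpowRLCoeff q γ 1 * x ^ (γ - q)) (𝓝[>] 0) (𝓝 L) := by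
  rw [HasLFDgen, taylor_remainder_affine_add_abs_rpow a b c hγ]
  exact tendsto_congr' <| eventually_nhdsWithin_of_forall fun x hx =>
    rlDerivN_const_mul_abs_rpow c γ q 1 hx

lemma tendsto_const_mul_rpow_nhdsGT_zero (C : ℝ) {e : ℝ} (he : 0 < e) :
    Tendsto (fun x => C * x ^ e) (𝓝[>] 0) (𝓝 0) := by
  have h := (continuousAt_rpow_const 0 e (Or.inr he.le)).tendsto.const_mul C
  rw [zero_rpow he.ne', mul_zero] at h
  exact h.mono_left nhdsWithin_le_nhds

lemma not_tendsto_const_mul_rpow_nhdsGT_zero {C e : ℝ} (hC : C ≠ 0) (he : e < 0) (L : ℝ) :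
    ¬ Tendsto (fun x => C * x ^ e) (𝓝[>] 0) (𝓝 L) := fun h =>
  not_tendsto_nhds_of_tendsto_atTop (tendsto_rpow_neg_nhdsGT_zero he) (C⁻¹ * L) <| by
    simpa only [inv_mul_cancel_left₀ hC] using h.const_mul C⁻¹

theorem stmt4_general (a b c γ : ℝ) (hc : c ≠ 0) (hγ1 : 1 < γ) :
    (∀ q : ℝ, 1 < q → q < γ →
      HasLFDgen (fun x => a + b * x + c * |x| ^ γ) q 0 1 0) ∧
    (∀ q : ℝ, γ < q → q < 2 →
      ¬ ∃ L, HasLFDgen (fun x => a + b * x + c * |x| ^ γ) q 0 1 L) := by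
  simp only [hasLFDgen_affine_add_abs_rpow_iff a b c hγ1]
  refine ⟨fun q _ hqγ => tendsto_const_mul_rpow_nhdsGT_zero _ (sub_pos.2 hqγ),
    fun q hγq hq2 ⟨L, hL⟩ => ?_⟩
  have hcoeff : 0 < absRpowRLCoeff q γ 1 :=
    absRpowRLCoeff_pos (by linarith) (by norm_num; linarith) (by linarith)
  exact not_tendsto_const_mul_rpow_nhdsGT_zero (mul_ne_zero hc hcoeff.ne') (sub_neg.2 hγq) L hL

theorem stmt4 (a b c γ : ℝ) (hc : c ≠ 0) (hγ1 : 1 < γ) (hγ2 : γ < 2) :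
    (∀ q : ℝ, 1 < q → q < γ →
      HasLFDgen (fun x => a + b * x + c * |x| ^ γ) q 0 1 0) ∧
    (∀ q : ℝ, γ < q → q < 2 →
      ¬ ∃ L, HasLFDgen (fun x => a + b * x + c * |x| ^ γ) q 0 1 L) :=
  stmt4_general a b c γ hc hγ1
end

section
/- The characteristic function of a symmetric Lévy distribution, P̃(k) = A·exp(−c|k|^μ) with A, c > 0 and 0 < μ < 1, has critical order μ at k = 0: the LFD 𝔻^q P̃(0) equals 0 for 0 < q < μ and fails to exist for μ < q < 1. -/
/-!
Substituting `y = x s` turns the Riemann-Liouville integral `∫₀ˣ g y (x - y)^(-q) dy` into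
`x^(1-q) ∫₀¹ g (x s) (1 - s)^(-q) ds`; differentiating under the integral sign gives
`D^q g x = x^(-q) / Γ(1-q) ∫₀¹ φ (x s) (1 - s)^(-q) ds` with `φ u = (1 - q) g u + u g' u`.
For `g u = A (exp (-c |u|^μ) - 1)` both `g` and `u g'` are `O(u^μ)`, so `|D^q g x| ≲ x^(μ-q) → 0`
when `q < μ`; and since `g' ≤ 0` and `g u ≤ -A c e⁻¹ u^μ` near `0`, `D^q g x ≤ -C x^(μ-q) → -∞`
when `q > μ`.
-/
open Real Filter Set Topology Asymptotics

/-- Riemann-Liouville fractional derivative of order `q ∈ (0,1)` with lower limit `a`. -/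
noncomputable def rlDeriv (q a : ℝ) (f : ℝ → ℝ) (x : ℝ) : ℝ :=
  (1 / Real.Gamma (1 - q)) * deriv (fun t => ∫ y in a..t, f y / (t - y) ^ q) x

/-- The local fractional derivative of order `q ∈ (0,1)` of `f` at `y` exists and equals `L`:
`lim_{x → y⁺} d^q (f(x) - f(y)) / [d(x-y)]^q = L`. -/
def HasLFD (f : ℝ → ℝ) (q y L : ℝ) : Prop :=
  Tendsto (fun x => rlDeriv q y (fun u => f u - f y) x) (𝓝[>] y) (𝓝 L)

open MeasureTheory

noncomputable def rescaledRLIntegral (q : ℝ) (φ : ℝ → ℝ) (x : ℝ) : ℝ :=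
  ∫ s in (0:ℝ)..1, φ (x * s) * (1 - s) ^ (-q)

section RescaledRLIntegral

variable {q μ x : ℝ} {φ ψ : ℝ → ℝ}

lemma intervalIntegrable_one_sub_rpow_neg (hq : q < 1) :
    IntervalIntegrable (fun s : ℝ => (1 - s) ^ (-q)) volume 0 1 := by
  simpa using ((intervalIntegral.intervalIntegrable_rpow' (a := 0) (b := 1) (r := -q)
    (by linarith)).comp_sub_left 1).symm

lemma intervalIntegrable_comp_mul_one_sub_rpow_neg {M : ℝ} (hq : q < 1) (hφ : Measurable φ)
    (hx : 0 < x) (hM : ∀ u ∈ Ioc 0 x, |φ u| ≤ M) :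
    IntervalIntegrable (fun s => φ (x * s) * (1 - s) ^ (-q)) volume 0 1 := by
  have hker := intervalIntegrable_one_sub_rpow_neg hq
  rw [intervalIntegrable_iff_integrableOn_Ioc_of_le zero_le_one] at hker ⊢
  refine Integrable.mono' (hker.const_mul M) (by fun_prop) ?_
  rw [ae_restrict_iff' measurableSet_Ioc]
  refine .of_forall fun s ⟨hs0, hs1⟩ => ?_
  have hk : 0 ≤ (1 - s) ^ (-q) := rpow_nonneg (by linarith) _
  rw [norm_mul, norm_of_nonneg hk, Real.norm_eq_abs]
  exact mul_le_mul_of_nonneg_right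
    (hM _ ⟨mul_pos hx hs0, mul_le_of_le_one_right hx.le hs1⟩) hk

lemma intervalIntegrable_comp_mul_one_sub_rpow_neg_of_abs_le_rpow {K : ℝ} (hq : q < 1)
    (hμ : 0 ≤ μ) (hφ : Measurable φ) (hx : 0 < x) (hK : ∀ u > 0, |φ u| ≤ K * u ^ μ) :
    IntervalIntegrable (fun s => φ (x * s) * (1 - s) ^ (-q)) volume 0 1 :=
  intervalIntegrable_comp_mul_one_sub_rpow_neg (M := |K| * x ^ μ) hq hφ hx fun u ⟨hu0, hux⟩ =>
    calc |φ u| ≤ K * u ^ μ := hK u hu0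
      _ ≤ |K| * x ^ μ := mul_le_mul (le_abs_self K) (rpow_le_rpow hu0.le hux hμ)
          (rpow_nonneg hu0.le μ) (abs_nonneg K)

lemma integral_div_sub_rpow_eq (q : ℝ) (φ : ℝ → ℝ) (hx : 0 < x) :
    ∫ y in (0:ℝ)..x, φ y / (x - y) ^ q = x ^ (1 - q) * rescaledRLIntegral q φ x := by
  have hsub := intervalIntegral.integral_comp_mul_left (a := 0) (b := 1)
    (fun y => φ y / (x - y) ^ q) hx.ne'
  simp only [mul_zero, mul_one, smul_eq_mul] at hsub
  rw [eq_inv_mul_iff_mul_eq₀ hx.ne'] at hsub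
  rw [← hsub, rescaledRLIntegral, ← intervalIntegral.integral_const_mul,
    ← intervalIntegral.integral_const_mul]
  refine intervalIntegral.integral_congr fun s hs => ?_
  rw [uIcc_of_le zero_le_one] at hs
  have h1s : 0 ≤ 1 - s := by linarith [hs.2]
  rw [show x - x * s = x * (1 - s) by ring, mul_rpow hx.le h1s, rpow_neg h1s,
    rpow_sub hx, rpow_one, div_eq_mul_inv, mul_inv]
  field_simp

lemma rescaledRLIntegral_mono (hx : 0 < x)
    (hφ : IntervalIntegrable (fun s => φ (x * s) * (1 - s) ^ (-q)) volume 0 1)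
    (hψ : IntervalIntegrable (fun s => ψ (x * s) * (1 - s) ^ (-q)) volume 0 1)
    (hle : ∀ u ∈ Ioo 0 x, φ u ≤ ψ u) :
    rescaledRLIntegral q φ x ≤ rescaledRLIntegral q ψ x :=
  intervalIntegral.integral_mono_on_of_le_Ioo zero_le_one hφ hψ fun s ⟨hs0, hs1⟩ =>
    mul_le_mul_of_nonneg_right (hle _ ⟨mul_pos hx hs0, mul_lt_of_lt_one_right hx hs1⟩)
      (rpow_nonneg (by linarith) _)

lemma rescaledRLIntegral_const_mul_rpow (L : ℝ) (hx : 0 ≤ x) :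
    rescaledRLIntegral q (fun u => L * u ^ μ) x
      = L * x ^ μ * ∫ s in (0:ℝ)..1, s ^ μ * (1 - s) ^ (-q) := by
  rw [rescaledRLIntegral, ← intervalIntegral.integral_const_mul]
  refine intervalIntegral.integral_congr fun s hs => ?_
  rw [uIcc_of_le zero_le_one] at hs
  simp only [mul_rpow hx hs.1]
  ring

lemma rescaledRLIntegral_le_mul_rpow {K L : ℝ} (hq : q < 1) (hμ : 0 ≤ μ) (hφ : Measurable φ)
    (hx : 0 < x) (hK : ∀ u > 0, |φ u| ≤ K * u ^ μ) (hle : ∀ u ∈ Ioo 0 x, φ u ≤ L * u ^ μ) :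
    rescaledRLIntegral q φ x ≤ L * x ^ μ * ∫ s in (0:ℝ)..1, s ^ μ * (1 - s) ^ (-q) := by
  rw [← rescaledRLIntegral_const_mul_rpow L hx.le]
  refine rescaledRLIntegral_mono hx
    (intervalIntegrable_comp_mul_one_sub_rpow_neg_of_abs_le_rpow hq hμ hφ hx hK)
    (intervalIntegrable_comp_mul_one_sub_rpow_neg_of_abs_le_rpow (K := |L|) hq hμ
      (by fun_prop : Measurable fun u : ℝ => L * u ^ μ) hx fun u hu => ?_) hle
  rw [abs_mul, abs_of_nonneg (rpow_nonneg hu.le μ)]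

lemma abs_rescaledRLIntegral_le {K : ℝ} (hq : q < 1) (hμ : 0 ≤ μ) (hφ : Measurable φ)
    (hx : 0 < x) (hK : ∀ u > 0, |φ u| ≤ K * u ^ μ) :
    |rescaledRLIntegral q φ x| ≤ K * x ^ μ * ∫ s in (0:ℝ)..1, s ^ μ * (1 - s) ^ (-q) := by
  have hneg : rescaledRLIntegral q (fun u => -φ u) x = -rescaledRLIntegral q φ x := by
    simp only [rescaledRLIntegral, neg_mul, intervalIntegral.integral_neg]
  refine abs_le.2 ⟨?_, ?_⟩
  · rw [neg_le, ← hneg]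
    exact rescaledRLIntegral_le_mul_rpow hq hμ hφ.neg hx (by simpa only [abs_neg] using hK)
      fun u hu => neg_le.1 (neg_le_of_abs_le (hK u hu.1))
  · exact rescaledRLIntegral_le_mul_rpow hq hμ hφ hx hK
      fun u hu => (le_abs_self _).trans (hK u hu.1)

lemma integral_rpow_mul_one_sub_rpow_neg_pos (hq : q < 1) (hμ : 0 ≤ μ) :
    0 < ∫ s in (0:ℝ)..1, s ^ μ * (1 - s) ^ (-q) := by
  refine intervalIntegral.intervalIntegral_pos_of_pos_on ?_
    (fun s ⟨hs0, hs1⟩ => mul_pos (rpow_pos_of_pos hs0 _) (rpow_pos_of_pos (by linarith) _))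
    zero_lt_one
  simpa only [one_mul] using intervalIntegrable_comp_mul_one_sub_rpow_neg_of_abs_le_rpow (K := 1)
    (x := 1) hq hμ (by fun_prop : Measurable fun u : ℝ => u ^ μ) one_pos
    fun u hu => by rw [one_mul, abs_of_nonneg (rpow_nonneg hu.le μ)]

end RescaledRLIntegral

structure HasPowerBounds (g : ℝ → ℝ) (K μ : ℝ) : Prop where
  measurable : Measurable g
  differentiableAt : ∀ u > 0, DifferentiableAt ℝ g u
  abs_le : ∀ u > 0, |g u| ≤ K * u ^ μ
  abs_deriv_le : ∀ u > 0, |deriv g u| ≤ K * u ^ (μ - 1)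

namespace HasPowerBounds

variable {g : ℝ → ℝ} {K μ q : ℝ}

lemma nonneg (hg : HasPowerBounds g K μ) : 0 ≤ K := by
  simpa using (abs_nonneg _).trans (hg.abs_le 1 one_pos)

lemma abs_mul_deriv_le (hg : HasPowerBounds g K μ) {u : ℝ} (hu : 0 < u) :
    |u * deriv g u| ≤ K * u ^ μ :=
  calc |u * deriv g u| ≤ u * (K * u ^ (μ - 1)) := by
        rw [abs_mul, abs_of_pos hu]
        exact mul_le_mul_of_nonneg_left (hg.abs_deriv_le u hu) hu.le
    _ = K * u ^ μ := by
        rw [rpow_sub_one hu.ne']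
        field_simp

lemma abs_deriv_comp_mul_mul_le (hg : HasPowerBounds g K μ) (hμ : 0 ≤ μ) {x s : ℝ} (hx : 0 < x)
    (hs : s ∈ Ioc 0 1) : |deriv g (x * s) * s| ≤ K * x ^ (μ - 1) :=
  calc |deriv g (x * s) * s| = |x * s * deriv g (x * s)| / x := by
        rw [abs_mul, abs_mul, abs_mul, abs_of_pos hx, abs_of_pos hs.1]
        field_simp
    _ ≤ K * (x * s) ^ μ / x := by
        gcongr
        exact hg.abs_mul_deriv_le (mul_pos hx hs.1)
    _ ≤ K * x ^ μ / x := by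
        have := hg.nonneg
        gcongr
        · exact (mul_pos hx hs.1).le
        · exact mul_le_of_le_one_right hx.le hs.2
    _ = K * x ^ (μ - 1) := by
        rw [rpow_sub_one hx.ne']
        ring

lemma hasDerivAt_rescaledRLIntegral (hg : HasPowerBounds g K μ) (hμ0 : 0 ≤ μ) (hμ1 : μ ≤ 1)
    (hq : q < 1) {t : ℝ} (ht : 0 < t) :
    HasDerivAt (rescaledRLIntegral q g)
      (t⁻¹ * rescaledRLIntegral q (fun u => u * deriv g u) t) t := by
  have hgm := hg.measurable
  have hball : ∀ x ∈ Metric.ball t (t / 2), t / 2 ≤ x := fun x hx => by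
    rw [Metric.mem_ball, Real.dist_eq, abs_lt] at hx
    linarith [hx.1]
  have hbound : ∀ᵐ s, s ∈ uIoc 0 1 → ∀ x ∈ Metric.ball t (t / 2),
      ‖deriv g (x * s) * s * (1 - s) ^ (-q)‖ ≤ K * (t / 2) ^ (μ - 1) * (1 - s) ^ (-q) := by
    refine .of_forall fun s hs x hx => ?_
    rw [uIoc_of_le zero_le_one] at hs
    have hk : 0 ≤ (1 - s) ^ (-q) := rpow_nonneg (by linarith [hs.2]) _
    have hx2 := hball x hx
    rw [Real.norm_eq_abs, abs_mul, abs_of_nonneg hk]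
    refine mul_le_mul_of_nonneg_right ?_ hk
    calc |deriv g (x * s) * s| ≤ K * x ^ (μ - 1) :=
          hg.abs_deriv_comp_mul_mul_le hμ0 (by linarith) hs
      _ ≤ K * (t / 2) ^ (μ - 1) :=
          mul_le_mul_of_nonneg_left (rpow_le_rpow_of_nonpos (by linarith) hx2 (by linarith))
            hg.nonneg
  have hderiv : ∀ᵐ s, s ∈ uIoc 0 1 → ∀ x ∈ Metric.ball t (t / 2),
      HasDerivAt (fun x => g (x * s) * (1 - s) ^ (-q))
        (deriv g (x * s) * s * (1 - s) ^ (-q)) x := by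
    refine .of_forall fun s hs x hx => ?_
    rw [uIoc_of_le zero_le_one] at hs
    have hxs : 0 < x * s := mul_pos (by linarith [hball x hx]) hs.1
    exact ((hg.differentiableAt _ hxs).hasDerivAt.comp x (hasDerivAt_mul_const s)).mul_const _
  refine (intervalIntegral.hasDerivAt_integral_of_dominated_loc_of_deriv_le
    (Metric.ball_mem_nhds t (half_pos ht))
    (.of_forall fun x =>
      (by fun_prop : Measurable fun s => g (x * s) * (1 - s) ^ (-q)).aestronglyMeasurable)
    (intervalIntegrable_comp_mul_one_sub_rpow_neg_of_abs_le_rpow hq hμ0 hgm ht hg.abs_le)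
    (by fun_prop : Measurable fun s => deriv g (t * s) * s * (1 - s) ^ (-q)).aestronglyMeasurable
    hbound ((intervalIntegrable_one_sub_rpow_neg hq).const_mul _) hderiv).2.congr_deriv ?_
  rw [rescaledRLIntegral, ← intervalIntegral.integral_const_mul]
  refine intervalIntegral.integral_congr fun s _ => ?_
  field_simp

lemma abs_one_sub_mul_add_mul_deriv_le (hg : HasPowerBounds g K μ) (hq : q < 1) {u : ℝ}
    (hu : 0 < u) : |(1 - q) * g u + u * deriv g u| ≤ (2 - q) * K * u ^ μ :=
  calc |(1 - q) * g u + u * deriv g u| ≤ (1 - q) * |g u| + |u * deriv g u| :=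
        (abs_add_le _ _).trans_eq (by rw [abs_mul (1 - q), abs_of_pos (sub_pos.2 hq)])
    _ ≤ (1 - q) * (K * u ^ μ) + K * u ^ μ :=
        add_le_add (mul_le_mul_of_nonneg_left (hg.abs_le u hu) (by linarith))
          (hg.abs_mul_deriv_le hu)
    _ = (2 - q) * K * u ^ μ := by ring

lemma hasDerivAt_integral_div_sub_rpow (hg : HasPowerBounds g K μ) (hμ0 : 0 ≤ μ) (hμ1 : μ ≤ 1)
    (hq : q < 1) {t : ℝ} (ht : 0 < t) :
    HasDerivAt (fun x => ∫ y in (0:ℝ)..x, g y / (x - y) ^ q)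
      (t ^ (-q) * rescaledRLIntegral q (fun u => (1 - q) * g u + u * deriv g u) t) t := by
  have hpow : HasDerivAt (fun x => x ^ (1 - q)) ((1 - q) * t ^ (-q)) t := by
    simpa using hasDerivAt_rpow_const (p := 1 - q) (Or.inl ht.ne')
  have hint : ∀ φ : ℝ → ℝ, Measurable φ → (∀ u > 0, |φ u| ≤ K * u ^ μ) →
      IntervalIntegrable (fun s => φ (t * s) * (1 - s) ^ (-q)) volume 0 1 := fun φ hφ hK =>
    intervalIntegrable_comp_mul_one_sub_rpow_neg_of_abs_le_rpow hq hμ0 hφ ht hK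
  have hsplit : rescaledRLIntegral q (fun u => (1 - q) * g u + u * deriv g u) t
      = (1 - q) * rescaledRLIntegral q g t + rescaledRLIntegral q (fun u => u * deriv g u) t := by
    have hg' := hint (fun u => u * deriv g u) (measurable_id.mul (measurable_deriv g))
      fun u hu => hg.abs_mul_deriv_le hu
    simp only [rescaledRLIntegral, add_mul, mul_assoc]
    rw [intervalIntegral.integral_add ((hint g hg.measurable hg.abs_le).const_mul _)
      (by simpa only [mul_assoc] using hg'), intervalIntegral.integral_const_mul]
  refine ((hpow.mul (hg.hasDerivAt_rescaledRLIntegral hμ0 hμ1 hq ht)).congr_of_eventuallyEq ?_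
    ).congr_deriv ?_
  · filter_upwards [Ioi_mem_nhds ht] with x hx using integral_div_sub_rpow_eq q g hx
  · rw [hsplit, show (1:ℝ) - q = -q + 1 by ring, rpow_add_one ht.ne']
    field_simp

lemma rlDeriv_eq (hg : HasPowerBounds g K μ) (hμ0 : 0 ≤ μ) (hμ1 : μ ≤ 1) (hq : q < 1) {x : ℝ}
    (hx : 0 < x) :
    rlDeriv q 0 g x = x ^ (-q) / Gamma (1 - q) *
      rescaledRLIntegral q (fun u => (1 - q) * g u + u * deriv g u) x := by
  rw [rlDeriv, (hg.hasDerivAt_integral_div_sub_rpow hμ0 hμ1 hq hx).deriv]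
  ring

lemma measurable_one_sub_mul_add_mul_deriv (hg : HasPowerBounds g K μ) :
    Measurable fun u => (1 - q) * g u + u * deriv g u := by
  have hgm := hg.measurable
  fun_prop

lemma tendsto_rlDeriv_zero (hg : HasPowerBounds g K μ) (hμ0 : 0 ≤ μ) (hμ1 : μ ≤ 1)
    (hqμ : q < μ) : Tendsto (rlDeriv q 0 g) (𝓝[>] 0) (𝓝 0) := by
  have hq : q < 1 := hqμ.trans_le hμ1
  set B := ∫ s in (0:ℝ)..1, s ^ μ * (1 - s) ^ (-q)
  have hpow : Tendsto (fun x : ℝ => x ^ (μ - q)) (𝓝[>] 0) (𝓝 0) := by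
    simpa [zero_rpow (sub_pos.2 hqμ).ne'] using
      ((continuous_rpow_const (sub_pos.2 hqμ).le).tendsto 0).mono_left nhdsWithin_le_nhds
  refine squeeze_zero_norm' (a := fun x => |Gamma (1 - q)|⁻¹ * ((2 - q) * K * B) * x ^ (μ - q))
    ?_ (by simpa using hpow.const_mul (|Gamma (1 - q)|⁻¹ * ((2 - q) * K * B)))
  filter_upwards [self_mem_nhdsWithin] with x (hx : 0 < x)
  rw [hg.rlDeriv_eq hμ0 hμ1 hq hx, Real.norm_eq_abs, abs_mul, abs_div,
    abs_of_nonneg (rpow_nonneg hx.le _)]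
  calc x ^ (-q) / |Gamma (1 - q)| * |rescaledRLIntegral q _ x|
      ≤ x ^ (-q) / |Gamma (1 - q)| * ((2 - q) * K * x ^ μ * B) :=
        mul_le_mul_of_nonneg_left (abs_rescaledRLIntegral_le hq hμ0
          hg.measurable_one_sub_mul_add_mul_deriv hx
          fun u hu => hg.abs_one_sub_mul_add_mul_deriv_le hq hu) (by positivity)
    _ = |Gamma (1 - q)|⁻¹ * ((2 - q) * K * B) * x ^ (μ - q) := by
        rw [sub_eq_add_neg μ q, rpow_add hx]
        ring

lemma tendsto_rlDeriv_atBot (hg : HasPowerBounds g K μ) (hμ0 : 0 ≤ μ) (hμ1 : μ ≤ 1)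
    (hqμ : μ < q) (hq : q < 1) {κ : ℝ} (hκ : 0 < κ)
    (hle : ∀ᶠ u in 𝓝[>] 0, g u ≤ -κ * u ^ μ) (hanti : ∀ u > 0, deriv g u ≤ 0) :
    Tendsto (rlDeriv q 0 g) (𝓝[>] 0) atBot := by
  obtain ⟨δ, hδ, hδle⟩ := mem_nhdsGT_iff_exists_Ioo_subset.1 hle
  set B := ∫ s in (0:ℝ)..1, s ^ μ * (1 - s) ^ (-q)
  have hB : 0 < B := integral_rpow_mul_one_sub_rpow_neg_pos hq hμ0
  have hΓ : 0 < Gamma (1 - q) := Gamma_pos_of_pos (by linarith)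
  set C := (1 - q) * κ * B / Gamma (1 - q)
  have hC : 0 < C := div_pos (mul_pos (mul_pos (sub_pos.2 hq) hκ) hB) hΓ
  refine tendsto_atBot_mono' _ ?_ (tendsto_neg_atTop_atBot.comp
    ((tendsto_rpow_neg_nhdsGT_zero (sub_neg.2 hqμ)).const_mul_atTop hC))
  filter_upwards [Ioo_mem_nhdsGT hδ] with x hx
  have hφle : ∀ u ∈ Ioo 0 x, (1 - q) * g u + u * deriv g u ≤ -((1 - q) * κ) * u ^ μ :=
    fun u hu => by
      have hgu : g u ≤ -κ * u ^ μ := hδle ⟨hu.1, hu.2.trans hx.2⟩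
      nlinarith [mul_nonpos_of_nonneg_of_nonpos hu.1.le (hanti u hu.1)]
  rw [Function.comp_apply, hg.rlDeriv_eq hμ0 hμ1 hq hx.1]
  calc x ^ (-q) / Gamma (1 - q) * rescaledRLIntegral q _ x
      ≤ x ^ (-q) / Gamma (1 - q) * (-((1 - q) * κ) * x ^ μ * B) :=
        mul_le_mul_of_nonneg_left (rescaledRLIntegral_le_mul_rpow hq hμ0
          hg.measurable_one_sub_mul_add_mul_deriv hx.1
          (fun u hu => hg.abs_one_sub_mul_add_mul_deriv_le hq hu) hφle)
          (div_nonneg (rpow_nonneg hx.1.le _) hΓ.le)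
    _ = -(C * x ^ (μ - q)) := by
        rw [sub_eq_add_neg μ q, rpow_add hx.1]
        ring

end HasPowerBounds

lemma abs_exp_neg_sub_one_le {v : ℝ} (hv : 0 ≤ v) : |exp (-v) - 1| ≤ v := by
  rw [abs_sub_comm, abs_of_nonneg (sub_nonneg.2 (exp_le_one_iff.2 (neg_nonpos.2 hv)))]
  linarith [add_one_le_exp (-v)]

lemma exp_neg_sub_one_le {v : ℝ} (hv0 : 0 ≤ v) (hv1 : v ≤ 1) : exp (-v) - 1 ≤ -(exp (-1) * v) := by
  -- `1 - exp (-v) = exp (-v) * (exp v - 1) ≥ exp (-v) * v ≥ exp (-1) * v`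
  have hprod : exp (-v) * exp v = 1 := by rw [← exp_add, neg_add_cancel, exp_zero]
  have hmono : exp (-1) ≤ exp (-v) := exp_le_exp.2 (by linarith)
  nlinarith [add_one_le_exp v, exp_pos (-v)]

section LevyProfile

variable {A c μ : ℝ}

lemma hasDerivAt_exp_neg_rpow_sub {u : ℝ} (hu : 0 < u) :
    HasDerivAt (fun v => A * exp (-c * |v| ^ μ) - A)
      (-(A * c * μ) * u ^ (μ - 1) * exp (-c * u ^ μ)) u := by
  have h := (((hasDerivAt_rpow_const (p := μ) (Or.inl hu.ne')).const_mul (-c)).exp.const_mul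
    A).sub_const A
  refine (h.congr_of_eventuallyEq ?_).congr_deriv (by ring)
  filter_upwards [Ioi_mem_nhds hu] with v hv
  rw [abs_of_pos hv]

lemma hasPowerBounds_exp_neg_rpow_sub (hA : 0 ≤ A) (hc : 0 ≤ c) (hμ0 : 0 ≤ μ) (hμ1 : μ ≤ 1) :
    HasPowerBounds (fun u => A * exp (-c * |u| ^ μ) - A) (A * c) μ where
  measurable := by fun_prop
  differentiableAt u hu := (hasDerivAt_exp_neg_rpow_sub hu).differentiableAt
  abs_le u hu := by
    rw [← mul_sub_one, abs_mul, abs_of_nonneg hA, neg_mul, abs_of_pos hu, mul_assoc]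
    exact mul_le_mul_of_nonneg_left (abs_exp_neg_sub_one_le (by positivity)) hA
  abs_deriv_le u hu := by
    rw [(hasDerivAt_exp_neg_rpow_sub hu).deriv, abs_mul, abs_mul, abs_neg,
      abs_of_nonneg (by positivity : 0 ≤ A * c * μ), abs_of_nonneg (rpow_nonneg hu.le _),
      abs_of_pos (exp_pos _)]
    have hexp : exp (-c * u ^ μ) ≤ 1 := exp_le_one_iff.2 (by nlinarith [rpow_nonneg hu.le μ])
    have hAc : 0 ≤ A * c := mul_nonneg hA hc
    calc A * c * μ * u ^ (μ - 1) * exp (-c * u ^ μ) ≤ A * c * 1 * u ^ (μ - 1) * 1 := by gcongr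
      _ = A * c * u ^ (μ - 1) := by ring

lemma deriv_exp_neg_rpow_sub_nonpos (hA : 0 ≤ A) (hc : 0 ≤ c) (hμ0 : 0 ≤ μ) {u : ℝ} (hu : 0 < u) :
    deriv (fun v => A * exp (-c * |v| ^ μ) - A) u ≤ 0 := by
  rw [(hasDerivAt_exp_neg_rpow_sub hu).deriv, neg_mul, neg_mul, neg_nonpos]
  positivity

lemma eventually_exp_neg_rpow_sub_le (hA : 0 ≤ A) (hc : 0 ≤ c) (hμ0 : 0 < μ) :
    ∀ᶠ u in 𝓝[>] 0, A * exp (-c * |u| ^ μ) - A ≤ -(A * c * exp (-1)) * u ^ μ := by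
  have hsmall : ∀ᶠ u in 𝓝[>] (0:ℝ), c * u ^ μ ≤ 1 := by
    have h : Tendsto (fun u : ℝ => c * u ^ μ) (𝓝[>] 0) (𝓝 0) := by
      simpa [zero_rpow hμ0.ne'] using
        (((continuous_rpow_const hμ0.le).tendsto 0).mono_left nhdsWithin_le_nhds).const_mul c
    exact h.eventually (eventually_le_nhds one_pos)
  filter_upwards [self_mem_nhdsWithin, hsmall] with u (hu : 0 < u) hcu
  have hv : 0 ≤ c * u ^ μ := by positivity
  rw [← mul_sub_one, abs_of_pos hu, neg_mul]
  calc A * (exp (-(c * u ^ μ)) - 1) ≤ A * -(exp (-1) * (c * u ^ μ)) :=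
        mul_le_mul_of_nonneg_left (exp_neg_sub_one_le hv hcu) hA
    _ = -(A * c * exp (-1)) * u ^ μ := by ring

end LevyProfile

theorem stmt17 (A c μ : ℝ) (hA : 0 < A) (hc : 0 < c) (hμ0 : 0 < μ) (hμ1 : μ < 1) :
    (∀ q : ℝ, 0 < q → q < μ →
      HasLFD (fun k : ℝ => A * Real.exp (-c * |k| ^ μ)) q 0 0) ∧
    (∀ q : ℝ, μ < q → q < 1 →
      ¬ ∃ L, HasLFD (fun k : ℝ => A * Real.exp (-c * |k| ^ μ)) q 0 L) := by
  have hsub : (fun u => A * exp (-c * |u| ^ μ) - A * exp (-c * |(0:ℝ)| ^ μ))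
      = fun u => A * exp (-c * |u| ^ μ) - A := by
    simp [zero_rpow hμ0.ne']
  have hg := hasPowerBounds_exp_neg_rpow_sub hA.le hc.le hμ0.le hμ1.le
  refine ⟨fun q _ hqμ => ?_, fun q hqμ hq1 ⟨L, hL⟩ => ?_⟩
  · rw [HasLFD, hsub]
    exact hg.tendsto_rlDeriv_zero hμ0.le hμ1.le hqμ
  · rw [HasLFD, hsub] at hL
    refine not_tendsto_nhds_of_tendsto_atBot ?_ L hL
    exact hg.tendsto_rlDeriv_atBot hμ0.le hμ1.le hqμ hq1 (by positivity)
      (eventually_exp_neg_rpow_sub_le hA.le hc.le hμ0)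
      fun u hu => deriv_exp_neg_rpow_sub_nonpos hA.le hc.le hμ0.le hu
end
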